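/- The relation ≤ on isomorphism classes of mixed graphs of order n and size m, defined by [G] ≤ [H] iff H is isomorphic to G or to a graph obtained from G by a finite sequence of Kelmans transformations, is a partial order (reflexive, transitive, and antisymmetric). -/

import Mathlib

attribute [local instance] Classical.propDecidable

/-- The spectral radius of a real square matrix: the maximum of the complex moduli
of its eigenvalues (roots of the characteristic polynomial over ℂ). -/
noncomputable def specRad {m : Type*} [Fintype m] [DecidableEq m] (M : Matrix m m ℝ) : ℝ :=
  sSup {r : ℝ | ∃ μ : ℂ, (M.map (fun x => (x : ℂ))).charpoly.IsRoot μ ∧ r = ‖μ‖}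

/-- The `A_α` matrix `α D⁺ + (1-α) A` of a mixed graph given by its adjacency matrix `A`,
where `D⁺` is the diagonal out-degree matrix. -/
noncomputable def Aalpha {n : ℕ} (α : ℝ) (A : Matrix (Fin n) (Fin n) ℝ) :
    Matrix (Fin n) (Fin n) ℝ :=
  α • Matrix.diagonal (fun i => ∑ j, A i j) + (1 - α) • A

/-- The Kelmans transformation of a mixed graph (given by its 0-1 adjacency matrix)
from `b` to `a`. -/
noncomputable def kelmansG {n : ℕ} (A : Matrix (Fin n) (Fin n) ℝ) (a b : Fin n) :
    Matrix (Fin n) (Fin n) ℝ :=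
  Matrix.of fun i j =>
    if i ≠ a ∧ i ≠ b ∧ j = a then max (A i a) (A i b)
    else if i ≠ a ∧ i ≠ b ∧ j = b then min (A i a) (A i b)
    else if i = a ∧ j ≠ a ∧ j ≠ b then max (A a j) (A b j)
    else if i = b ∧ j ≠ a ∧ j ≠ b then min (A a j) (A b j)
    else A i j

/-- `A` is the adjacency matrix of a mixed graph: a 0-1 matrix with zero diagonal. -/
def IsMixedAdj {n : ℕ} (A : Matrix (Fin n) (Fin n) ℝ) : Prop :=
  (∀ i j, A i j = 0 ∨ A i j = 1) ∧ ∀ i, A i i = 0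

/-- The underlying simple graph of a mixed graph: forget orientations. -/
def underlying {n : ℕ} (A : Matrix (Fin n) (Fin n) ℝ) : SimpleGraph (Fin n) where
  Adj u v := u ≠ v ∧ (A u v = 1 ∨ A v u = 1)
  symm := ⟨fun u v ⟨h1, h2⟩ => ⟨h1.symm, h2.symm⟩⟩
  loopless := ⟨fun u h => h.1 rfl⟩

/-- The graph of undirected edges of a mixed graph (delete all arcs). -/
def undirPart {n : ℕ} (A : Matrix (Fin n) (Fin n) ℝ) : SimpleGraph (Fin n) where
  Adj u v := u ≠ v ∧ A u v = 1 ∧ A v u = 1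
  symm := ⟨fun u v ⟨h1, h2, h3⟩ => ⟨h1.symm, h3, h2⟩⟩
  loopless := ⟨fun u h => h.1 rfl⟩

/-- Isomorphism of mixed graphs given by adjacency matrices. -/
def MixedIso {n : ℕ} (A B : Matrix (Fin n) (Fin n) ℝ) : Prop :=
  ∃ e : Equiv.Perm (Fin n), ∀ u v, A u v = B (e u) (e v)

/-- A single Kelmans transformation step, applied at a pair of distinct vertices with
no arc between them. -/
def KelmansStep {n : ℕ} (A B : Matrix (Fin n) (Fin n) ℝ) : Prop :=
  ∃ a b : Fin n, a ≠ b ∧ A a b = A b a ∧ B = kelmansG A a b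

/-- The relation `[G] ≤ [H]`: `H` is isomorphic to `G`, or to a graph obtained from `G`
by a finite sequence of Kelmans transformations. -/
def KelmansLe {n : ℕ} (A B : Matrix (Fin n) (Fin n) ℝ) : Prop :=
  ∃ C, Relation.ReflTransGen KelmansStep A C ∧ MixedIso C B

/-! A Kelmans step at `a, b` fixes the total degrees `d(i)` (in- plus out-degree) off `{a, b}`,
keeps `d(a) + d(b)`, and raises `d(a)` to at least `max (d a) (d b)`, because row and column
`a` dominate those of both `a` and `b` (the latter after swapping `a` and `b`). Hence
`∑ d(i)²` grows by `2 (d'(a) - d(a)) (d'(a) - d(b)) ≥ 0`; if it does not grow, the new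
`a`-row and `a`-column are those of `a` or of `b`, and the step is the identity or the swap
of `a` and `b`. So along a chain of Kelmans steps `∑ d(i)²` strictly increases unless the
endpoints are isomorphic, which gives antisymmetry. -/

section

open Finset Relation

variable {n : ℕ}

lemma mixedIso_iff {A B : Matrix (Fin n) (Fin n) ℝ} :
    MixedIso A B ↔ ∃ e : Equiv.Perm (Fin n), A = B.submatrix e e := by
  simp only [MixedIso, ← Matrix.ext_iff, Matrix.submatrix_apply]

lemma mixedIso_submatrix (B : Matrix (Fin n) (Fin n) ℝ) (e : Equiv.Perm (Fin n)) :
    MixedIso (B.submatrix e e) B :=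
  ⟨e, fun _ _ => rfl⟩

lemma MixedIso.refl (A : Matrix (Fin n) (Fin n) ℝ) : MixedIso A A :=
  mixedIso_submatrix A (Equiv.refl _)

lemma MixedIso.trans {A B C : Matrix (Fin n) (Fin n) ℝ}
    (hAB : MixedIso A B) (hBC : MixedIso B C) : MixedIso A C := by
  obtain ⟨e, he⟩ := hAB
  obtain ⟨f, hf⟩ := hBC
  exact ⟨e.trans f, fun u v => (he u v).trans (hf _ _)⟩

lemma sum_sub_sum_eq_of_eq_off_pair {ι M : Type*} [Fintype ι] [DecidableEq ι] [AddCommGroup M]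
    {f g : ι → M} {a b : ι} (hab : a ≠ b) (h : ∀ j, j ≠ a → j ≠ b → f j = g j) :
    ∑ j, f j - ∑ j, g j = f a + f b - (g a + g b) := by
  have hoff : ∑ j ∈ {a, b}ᶜ, f j = ∑ j ∈ {a, b}ᶜ, g j :=
    sum_congr rfl fun j hj => by
      simp only [mem_compl, mem_insert, mem_singleton, not_or] at hj
      exact h j hj.1 hj.2
  rw [← sum_add_sum_compl {a, b} f, ← sum_add_sum_compl {a, b} g, sum_pair hab, sum_pair hab,
    hoff]
  abel

section Entries

variable (A : Matrix (Fin n) (Fin n) ℝ) (a b : Fin n)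

lemma kelmansG_apply_self (i : Fin n) : kelmansG A a b i i = A i i := by
  simp only [kelmansG, Matrix.of_apply]
  split_ifs <;> grind

lemma le_kelmansG_row (j : Fin n) : A a j ≤ kelmansG A a b a j := by
  simp only [kelmansG, Matrix.of_apply]
  split_ifs <;> grind

lemma le_kelmansG_col (i : Fin n) : A i a ≤ kelmansG A a b i a := by
  simp only [kelmansG, Matrix.of_apply]
  split_ifs <;> grind

lemma kelmansG_add_row (j : Fin n) :
    kelmansG A a b a j + kelmansG A a b b j = A a j + A b j := by
  simp only [kelmansG, Matrix.of_apply]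
  split_ifs <;> grind

lemma kelmansG_add_col (i : Fin n) :
    kelmansG A a b i a + kelmansG A a b i b = A i a + A i b := by
  simp only [kelmansG, Matrix.of_apply]
  split_ifs <;> grind

lemma kelmansG_submatrix_swap (hdiag : A a a = A b b) (hsym : A a b = A b a) :
    kelmansG (A.submatrix (Equiv.swap a b) (Equiv.swap a b)) a b = kelmansG A a b := by
  ext i j
  simp only [kelmansG, Matrix.of_apply, Matrix.submatrix_apply, Equiv.swap_apply_left,
    Equiv.swap_apply_right]
  split_ifs <;> grind [Equiv.swap_apply_of_ne_of_ne]

lemma kelmansG_submatrix (e : Equiv.Perm (Fin n)) :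
    kelmansG (A.submatrix e e) (e.symm a) (e.symm b) = (kelmansG A a b).submatrix e e := by
  ext i j
  simp only [kelmansG, Matrix.of_apply, Matrix.submatrix_apply, Equiv.apply_symm_apply, ne_eq,
    Equiv.eq_symm_apply]

lemma kelmansG_apply_of_ne {i j : Fin n} (hia : i ≠ a) (hib : i ≠ b) (hja : j ≠ a)
    (hjb : j ≠ b) : kelmansG A a b i j = A i j := by
  simp [kelmansG, hia, hib, hja, hjb]

end Entries

noncomputable def totalDeg (A : Matrix (Fin n) (Fin n) ℝ) (i : Fin n) : ℝ :=
  ∑ j, (A i j + A j i)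

noncomputable def degSqSum (A : Matrix (Fin n) (Fin n) ℝ) : ℝ :=
  ∑ i, totalDeg A i ^ 2

lemma totalDeg_submatrix (A : Matrix (Fin n) (Fin n) ℝ) (e : Equiv.Perm (Fin n)) (i : Fin n) :
    totalDeg (A.submatrix e e) i = totalDeg A (e i) :=
  Equiv.sum_comp e fun j => A (e i) j + A j (e i)

lemma degSqSum_submatrix (A : Matrix (Fin n) (Fin n) ℝ) (e : Equiv.Perm (Fin n)) :
    degSqSum (A.submatrix e e) = degSqSum A := by
  simp only [degSqSum, totalDeg_submatrix]
  exact Equiv.sum_comp e fun i => totalDeg A i ^ 2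

lemma MixedIso.degSqSum_eq {A B : Matrix (Fin n) (Fin n) ℝ} (h : MixedIso A B) :
    degSqSum A = degSqSum B := by
  obtain ⟨e, rfl⟩ := mixedIso_iff.1 h
  exact degSqSum_submatrix B e

section Degrees

variable (A : Matrix (Fin n) (Fin n) ℝ) (a b : Fin n)

lemma totalDeg_kelmansG_of_ne (hab : a ≠ b) {i : Fin n} (hia : i ≠ a) (hib : i ≠ b) :
    totalDeg (kelmansG A a b) i = totalDeg A i := by
  rw [← sub_eq_zero, totalDeg, totalDeg, sum_sub_sum_eq_of_eq_off_pair hab fun j hja hjb => by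
    rw [kelmansG_apply_of_ne A a b hia hib hja hjb, kelmansG_apply_of_ne A a b hja hjb hia hib]]
  linarith [kelmansG_add_row A a b i, kelmansG_add_col A a b i]

lemma totalDeg_kelmansG_add :
    totalDeg (kelmansG A a b) a + totalDeg (kelmansG A a b) b = totalDeg A a + totalDeg A b := by
  simp only [totalDeg, ← sum_add_distrib]
  exact sum_congr rfl fun j _ => by linarith [kelmansG_add_row A a b j, kelmansG_add_col A a b j]

lemma totalDeg_le_kelmansG : totalDeg A a ≤ totalDeg (kelmansG A a b) a :=
  sum_le_sum fun j _ => add_le_add (le_kelmansG_row A a b j) (le_kelmansG_col A a b j)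

lemma totalDeg_right_le_kelmansG (hdiag : A a a = A b b) (hsym : A a b = A b a) :
    totalDeg A b ≤ totalDeg (kelmansG A a b) a := by
  have h := totalDeg_le_kelmansG (A.submatrix (Equiv.swap a b) (Equiv.swap a b)) a b
  rwa [kelmansG_submatrix_swap A a b hdiag hsym, totalDeg_submatrix,
    Equiv.swap_apply_left] at h

lemma kelmansG_eq_self_of_totalDeg_eq (h : totalDeg (kelmansG A a b) a = totalDeg A a) :
    kelmansG A a b = A := by
  set B := kelmansG A a b
  have hterm : ∀ j, A a j + A j a = B a j + B j a :=
    fun j => (sum_eq_sum_iff_of_le fun j _ =>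
      add_le_add (le_kelmansG_row A a b j) (le_kelmansG_col A a b j)).1 h.symm j (mem_univ j)
  have hrow : ∀ j, B a j = A a j := fun j =>
    le_antisymm (by linarith [hterm j, le_kelmansG_col A a b j]) (le_kelmansG_row A a b j)
  have hcol : ∀ i, B i a = A i a := fun i =>
    le_antisymm (by linarith [hterm i, le_kelmansG_row A a b i]) (le_kelmansG_col A a b i)
  ext i j
  rcases eq_or_ne i a with rfl | hia
  · exact hrow j
  rcases eq_or_ne j a with rfl | hja
  · exact hcol i
  rcases eq_or_ne i b with rfl | hib
  · linarith [kelmansG_add_row A a i j, hrow j]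
  rcases eq_or_ne j b with rfl | hjb
  · linarith [kelmansG_add_col A a j i, hcol i]
  exact kelmansG_apply_of_ne A a b hia hib hja hjb

lemma mixedIso_kelmansG_of_totalDeg_eq (hdiag : A a a = A b b) (hsym : A a b = A b a)
    (h : totalDeg (kelmansG A a b) a = totalDeg A a ∨
      totalDeg (kelmansG A a b) a = totalDeg A b) :
    MixedIso A (kelmansG A a b) := by
  rcases h with h | h
  · rw [kelmansG_eq_self_of_totalDeg_eq A a b h]
    exact MixedIso.refl A
  · have hb : totalDeg A b = totalDeg (A.submatrix (Equiv.swap a b) (Equiv.swap a b)) a := by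
      rw [totalDeg_submatrix, Equiv.swap_apply_left]
    rw [hb, ← kelmansG_submatrix_swap A a b hdiag hsym] at h
    rw [← kelmansG_submatrix_swap A a b hdiag hsym, kelmansG_eq_self_of_totalDeg_eq _ a b h]
    exact ⟨Equiv.swap a b, fun u v => by simp⟩

theorem degSqSum_lt_kelmansG_or_mixedIso (hab : a ≠ b) (hdiag : A a a = A b b)
    (hsym : A a b = A b a) :
    degSqSum A < degSqSum (kelmansG A a b) ∨ MixedIso A (kelmansG A a b) := by
  have hpx := totalDeg_le_kelmansG A a b
  have hpy := totalDeg_right_le_kelmansG A a b hdiag hsym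
  have hdiff : degSqSum (kelmansG A a b) - degSqSum A =
      2 * (totalDeg (kelmansG A a b) a - totalDeg A a) *
        (totalDeg (kelmansG A a b) a - totalDeg A b) := by
    rw [degSqSum, degSqSum, sum_sub_sum_eq_of_eq_off_pair hab fun i hia hib => by
      rw [totalDeg_kelmansG_of_ne A a b hab hia hib],
      eq_sub_of_add_eq' (totalDeg_kelmansG_add A a b)]
    ring
  rcases (mul_nonneg (sub_nonneg.2 hpx) (sub_nonneg.2 hpy)).lt_or_eq with hlt | heq
  · left
    linarith
  · right
    refine mixedIso_kelmansG_of_totalDeg_eq A a b hdiag hsym ?_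
    simpa only [mul_eq_zero, sub_eq_zero, eq_comm (a := (0 : ℝ))] using heq

end Degrees

section Chains

variable {A B C : Matrix (Fin n) (Fin n) ℝ}

lemma KelmansStep.apply_self (h : KelmansStep A B) (i : Fin n) : B i i = A i i := by
  obtain ⟨a, b, -, -, rfl⟩ := h
  exact kelmansG_apply_self A a b i

lemma apply_self_of_reflTransGen (h : ReflTransGen KelmansStep A C) (i : Fin n) :
    C i i = A i i := by
  induction h with
  | refl => rfl
  | tail _ hstep ih => rw [KelmansStep.apply_self hstep, ih]

lemma KelmansStep.degSqSum_lt_or_mixedIso (h : KelmansStep A B) (hA : ∀ i, A i i = 0) :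
    degSqSum A < degSqSum B ∨ MixedIso A B := by
  obtain ⟨a, b, hab, hsym, rfl⟩ := h
  exact degSqSum_lt_kelmansG_or_mixedIso A a b hab ((hA a).trans (hA b).symm) hsym

lemma degSqSum_lt_or_mixedIso_of_reflTransGen (hA : ∀ i, A i i = 0)
    (h : ReflTransGen KelmansStep A C) : degSqSum A < degSqSum C ∨ MixedIso A C := by
  induction h with
  | refl => exact Or.inr (MixedIso.refl A)
  | @tail B C hAB hBC ih =>
    have hB : ∀ i, B i i = 0 := fun i => (apply_self_of_reflTransGen hAB i).trans (hA i)
    rcases ih with hlt | hiso <;>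
      rcases KelmansStep.degSqSum_lt_or_mixedIso hBC hB with hlt' | hiso'
    · exact Or.inl (hlt.trans hlt')
    · exact Or.inl (hlt.trans_eq hiso'.degSqSum_eq)
    · exact Or.inl (hiso.degSqSum_eq.trans_lt hlt')
    · exact Or.inr (hiso.trans hiso')

lemma KelmansStep.exists_of_mixedIso {B' : Matrix (Fin n) (Fin n) ℝ} (hiso : MixedIso A B)
    (h : KelmansStep B B') : ∃ A', KelmansStep A A' ∧ MixedIso A' B' := by
  obtain ⟨e, rfl⟩ := mixedIso_iff.1 hiso
  obtain ⟨a, b, hab, hsym, rfl⟩ := h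
  refine ⟨_, ⟨e.symm a, e.symm b, e.symm.injective.ne hab, by simpa using hsym, rfl⟩, ?_⟩
  rw [kelmansG_submatrix]
  exact mixedIso_submatrix _ e

lemma exists_reflTransGen_of_mixedIso (hiso : MixedIso A B) (h : ReflTransGen KelmansStep B C) :
    ∃ A', ReflTransGen KelmansStep A A' ∧ MixedIso A' C := by
  induction h with
  | refl => exact ⟨A, .refl, hiso⟩
  | tail _ hstep ih =>
    obtain ⟨A', hA', hiso'⟩ := ih
    obtain ⟨A'', hstep', hiso''⟩ := KelmansStep.exists_of_mixedIso hiso' hstep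
    exact ⟨A'', hA'.tail hstep', hiso''⟩

lemma KelmansLe.refl (A : Matrix (Fin n) (Fin n) ℝ) : KelmansLe A A :=
  ⟨A, .refl, MixedIso.refl A⟩

lemma KelmansLe.trans (hAB : KelmansLe A B) (hBC : KelmansLe B C) : KelmansLe A C := by
  obtain ⟨B', hAB', hB'B⟩ := hAB
  obtain ⟨C', hBC', hC'C⟩ := hBC
  obtain ⟨C'', hB'C'', hC''C'⟩ := exists_reflTransGen_of_mixedIso hB'B hBC'
  exact ⟨C'', hAB'.trans hB'C'', hC''C'.trans hC'C⟩

lemma KelmansLe.antisymm (hA : ∀ i, A i i = 0) (hB : ∀ i, B i i = 0) (hAB : KelmansLe A B)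
    (hBA : KelmansLe B A) : MixedIso A B := by
  obtain ⟨B', hAB', hB'B⟩ := hAB
  obtain ⟨A', hBA', hA'A⟩ := hBA
  rcases degSqSum_lt_or_mixedIso_of_reflTransGen hA hAB' with hlt | hiso
  · rw [hB'B.degSqSum_eq] at hlt
    rcases degSqSum_lt_or_mixedIso_of_reflTransGen hB hBA' with hlt' | hiso'
    · exact absurd (hlt.trans (hlt'.trans_eq hA'A.degSqSum_eq)) (lt_irrefl _)
    · exact absurd (hlt.trans_eq (hiso'.trans hA'A).degSqSum_eq) (lt_irrefl _)
  · exact hiso.trans hB'B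

end Chains

end

/-- The relation `≤` on isomorphism classes of mixed graphs of a given order (and size)
is a partial order: it is reflexive, transitive, and antisymmetric (where equality of
isomorphism classes means the graphs are isomorphic). -/
theorem kelmansLe_partialOrder {n : ℕ} :
    (∀ A : Matrix (Fin n) (Fin n) ℝ, IsMixedAdj A → KelmansLe A A) ∧
    (∀ A B C : Matrix (Fin n) (Fin n) ℝ, IsMixedAdj A → IsMixedAdj B → IsMixedAdj C →
      KelmansLe A B → KelmansLe B C → KelmansLe A C) ∧
    (∀ A B : Matrix (Fin n) (Fin n) ℝ, IsMixedAdj A → IsMixedAdj B →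
      KelmansLe A B → KelmansLe B A → MixedIso A B) :=
  ⟨fun A _ => KelmansLe.refl A, fun _ _ _ _ _ _ => KelmansLe.trans,
    fun _ _ hA hB => KelmansLe.antisymm hA.2 hB.2⟩
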